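/- For fixed y ∈ [0,1] and any reference point c ∈ (0,1) with c > 1−y, and any x ∈ [0,1], one has G₋(x,y) ≥ G₋(c,y) + g₋'(c,y)·(x − c), where g₋'(x,y) = −1 + 2y − (1−2x)√(y(1−y)/(x(1−x))). -/

import Mathlib

/-!
With `s = √(y(1-y))`, `gMinus x y = x + (1-2x)(1-y) - 2 s √(x(1-x))` is convex in `x` because
`√(x(1-x))` is concave, so its tangent lines are minorants; the tangent inequality for `√(x(1-x))`
is AM-GM for `√(c(1-x))` and `√(x(1-c))`. Since `gMinus x y = (√(xy) - √((1-x)(1-y)))² ≥ 0`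
vanishes at `x = 1 - y`, the slope at `c > 1 - y` is nonnegative, so on `x ≤ 1 - y`, where
`GMinus` is `0`, the tangent line stays below its value `0` at `x = 1 - y`.
-/

noncomputable def gMinus (x y : ℝ) : ℝ := x + (1 - 2*x)*(1 - y) - 2*Real.sqrt (x*(1 - x)*y*(1 - y))
noncomputable def GMinus (x y : ℝ) : ℝ := if x > 1 - y then gMinus x y else 0
noncomputable def gMinus' (x y : ℝ) : ℝ := -1 + 2*y - (1 - 2*x)*Real.sqrt (y*(1 - y)/(x*(1 - x)))

open Real Set

lemma sqrt_mul_one_sub_le_tangent {c x : ℝ} (hc : c ∈ Ioo 0 1) (hx : x ∈ Icc 0 1) :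
    √(x * (1 - x)) ≤ √(c * (1 - c)) + (1 - 2 * c) / (2 * √(c * (1 - c))) * (x - c) := by
  obtain ⟨hc0, hc1⟩ := hc
  obtain ⟨hx0, hx1⟩ := hx
  have ht : 0 < √(c * (1 - c)) := sqrt_pos.mpr (by nlinarith)
  have ht2 : √(c * (1 - c)) ^ 2 = c * (1 - c) := sq_sqrt (by nlinarith)
  have hprod : √(c * (1 - c)) * √(x * (1 - x)) = √(c * (1 - x)) * √(x * (1 - c)) := by
    rw [← sqrt_mul (by nlinarith), ← sqrt_mul (by nlinarith)]
    ring_nf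
  have amgm := two_mul_le_add_sq (√(c * (1 - x))) (√(x * (1 - c)))
  rw [sq_sqrt (by nlinarith), sq_sqrt (by nlinarith)] at amgm
  rw [← sub_nonneg]
  have hdiff : √(c * (1 - c)) + (1 - 2 * c) / (2 * √(c * (1 - c))) * (x - c) - √(x * (1 - x))
      = (c * (1 - x) + x * (1 - c) - 2 * (√(c * (1 - c)) * √(x * (1 - x))))
        / (2 * √(c * (1 - c))) := by
    field_simp
    linear_combination 2 * ht2
  rw [hdiff]
  apply div_nonneg _ (by positivity)
  linarith

variable {x y c : ℝ}

lemma gMinus_eq (hy : y ∈ Icc 0 1) (x : ℝ) :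
    gMinus x y = x + (1 - 2 * x) * (1 - y) - 2 * √(y * (1 - y)) * √(x * (1 - x)) := by
  rw [gMinus, mul_assoc 2, ← sqrt_mul (by nlinarith [hy.1, hy.2])]
  ring_nf

lemma gMinus'_eq (hy : y ∈ Icc 0 1) (c : ℝ) :
    gMinus' c y = -1 + 2 * y - (1 - 2 * c) * (√(y * (1 - y)) / √(c * (1 - c))) := by
  rw [gMinus', sqrt_div (by nlinarith [hy.1, hy.2])]

lemma gMinus_tangent_le (hy : y ∈ Icc 0 1) (hc : c ∈ Ioo 0 1) (hx : x ∈ Icc 0 1) :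
    gMinus c y + gMinus' c y * (x - c) ≤ gMinus x y := by
  have hs : 0 ≤ 2 * √(y * (1 - y)) := by positivity
  have hsqrt := mul_le_mul_of_nonneg_left (sqrt_mul_one_sub_le_tangent hc hx) hs
  rw [gMinus_eq hy, gMinus_eq hy, gMinus'_eq hy]
  linear_combination hsqrt

lemma gMinus_eq_sq (hx : x ∈ Icc 0 1) (hy : y ∈ Icc 0 1) :
    gMinus x y = (√(x * y) - √((1 - x) * (1 - y))) ^ 2 := by
  obtain ⟨hx0, hx1⟩ := hx
  obtain ⟨hy0, hy1⟩ := hy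
  have hprod : √(x * y) * √((1 - x) * (1 - y)) = √(x * (1 - x) * y * (1 - y)) := by
    rw [← sqrt_mul (by positivity)]
    ring_nf
  rw [gMinus, sub_sq, sq_sqrt (by positivity), sq_sqrt (by nlinarith), mul_assoc 2, hprod]
  ring

lemma gMinus_nonneg (hx : x ∈ Icc 0 1) (hy : y ∈ Icc 0 1) : 0 ≤ gMinus x y := by
  rw [gMinus_eq_sq hx hy]
  positivity

lemma gMinus_one_sub_self (hy : y ∈ Icc 0 1) : gMinus (1 - y) y = 0 := by
  rw [gMinus_eq_sq (Icc.mem_iff_one_sub_mem.mp hy) hy, sub_sub_cancel, mul_comm]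
  ring

lemma gMinus'_nonneg (hy : y ∈ Icc 0 1) (hc : c ∈ Ioo 0 1) (hcy : 1 - y < c) :
    0 ≤ gMinus' c y := by
  have htangent := gMinus_tangent_le (x := 1 - y) hy hc (Icc.mem_iff_one_sub_mem.mp hy)
  rw [gMinus_one_sub_self hy] at htangent
  have hgc := gMinus_nonneg (Ioo_subset_Icc_self hc) hy
  exact nonneg_of_mul_nonneg_left (by linarith) (by linarith : 0 < c - (1 - y))

/-- Linearized lower Cauchy–Schwarz constraint: tangent line at `c` minorizes `G₋`. -/
theorem stmt4 (y c x : ℝ) (hy : y ∈ Set.Icc (0:ℝ) 1) (hc : c ∈ Set.Ioo (0:ℝ) 1)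
    (hcy : 1 - y < c) (hx : x ∈ Set.Icc (0:ℝ) 1) :
    GMinus c y + gMinus' c y * (x - c) ≤ GMinus x y := by
  rw [GMinus, if_pos hcy, GMinus]
  split_ifs with hxy
  · exact gMinus_tangent_le hy hc hx
  · calc gMinus c y + gMinus' c y * (x - c)
        ≤ gMinus c y + gMinus' c y * (1 - y - c) := by
          gcongr
          · exact gMinus'_nonneg hy hc hcy
          · linarith
      _ ≤ gMinus (1 - y) y :=
          gMinus_tangent_le hy hc (Icc.mem_iff_one_sub_mem.mp hy)
      _ = 0 := gMinus_one_sub_self hy
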